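/- arXiv:2105.09635 — 4 statements merged into one kernel-verified Lean document; each statement's English description precedes it below -/
import Mathlib

section
/- Let n ≥ 6 and r ∈ {0, 1, …, n−1}. Then, as an inequality of rational numbers, (r+1)^{r−1}·(s_{n−r} − 1)^r ≤ 3·(s_{n−2} − 1)², where the power (r+1)^{r−1} is taken in ℚ (so for r = 0 the left-hand side equals 1). Moreover, equality holds if and only if r = 2. -/
def sylv : ℕ → ℕ
  | 0 => 2
  | n + 1 => sylv n * (sylv n - 1) + 1

/-!
Write `t_k = s_k - 1`, so that `t_{k+1} = t_k (t_k + 1)`. The term at `r = 2` is exactly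
`3 t_{n-2}^2`, and the terms at `r = 0, 1` (namely `1` and `t_{n-2} (t_{n-2} + 1)`) are smaller.
For `r ≥ 2` the terms decrease strictly: with `t = t_{n-r-1}`, the ratio of the terms at `r + 1`
and at `r` is `(r+2)^r t / ((r+1)^(r-1) (t+1)^r)`. It is `< 1` for `r ≥ 3` by `2^r t ≤ (t+1)^r`
and `(1 + 1/(r+1))^(r+1) ≤ e < 3`, and for `r = 2` because `t = t_{n-3} ≥ t_3 = 6`.
-/

lemma sylv_succ (k : ℕ) : sylv (k + 1) = sylv k * (sylv k - 1) + 1 := rfl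

lemma two_le_sylv (k : ℕ) : 2 ≤ sylv k := by
  cases k with
  | zero => rfl
  | succ k =>
    have h := two_le_sylv k
    rw [sylv_succ]
    nlinarith [show 1 ≤ sylv k - 1 by omega]

lemma sylv_monotone : Monotone sylv :=
  monotone_nat_of_le_succ fun k => by
    have h : 1 ≤ sylv k - 1 := by have := two_le_sylv k; omega
    rw [sylv_succ]
    nlinarith

lemma seven_le_sylv {k : ℕ} (hk : 2 ≤ k) : 7 ≤ sylv k :=
  sylv_monotone hk

lemma cast_sylv_succ_sub_one (k : ℕ) :
    (sylv (k + 1) : ℚ) - 1 = ((sylv k : ℚ) - 1) * sylv k := by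
  rw [sylv_succ, Nat.cast_add, Nat.cast_mul, Nat.cast_sub (by linarith [two_le_sylv k])]
  push_cast
  ring

lemma add_one_pow_le_three_mul_pow (k : ℕ) : (k + 1) ^ k ≤ 3 * k ^ k := by
  rcases Nat.eq_zero_or_pos k with rfl | hk
  · simp
  have h : ((k : ℝ) + 1) ^ k ≤ 3 * (k : ℝ) ^ k :=
    calc ((k : ℝ) + 1) ^ k = (1 + (k : ℝ)⁻¹) ^ k * (k : ℝ) ^ k := by
          rw [← mul_pow]; field_simp
      _ ≤ 3 * (k : ℝ) ^ k := by
          gcongr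
          exact Real.one_add_inv_pow_le_exp.trans (Real.exp_one_lt_d9.trans (by norm_num)).le
  exact_mod_cast h

lemma three_mul_add_one_lt_two_pow {r : ℕ} (hr : 4 ≤ r) : 3 * (r + 1) < 2 ^ r := by
  induction r, hr using Nat.le_induction with
  | base => norm_num
  | succ r _ ih => rw [pow_succ]; omega

lemma add_three_pow_lt_two_pow_mul_add_two_pow {k : ℕ} (hk : 2 ≤ k) :
    (k + 3) ^ (k + 1) < 2 ^ (k + 1) * (k + 2) ^ k := by
  rcases hk.eq_or_lt with rfl | hk
  · norm_num
  refine lt_of_mul_lt_mul_right (a := k + 3) ?_ (Nat.zero_le _)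
  calc (k + 3) ^ (k + 1) * (k + 3) = (k + 2 + 1) ^ (k + 2) := by ring
    _ ≤ 3 * (k + 2) ^ (k + 2) := add_one_pow_le_three_mul_pow (k + 2)
    _ = (3 * (k + 2)) * (k + 2) * (k + 2) ^ k := by ring
    _ < 2 ^ (k + 1) * (k + 3) * (k + 2) ^ k := by
        gcongr
        · exact three_mul_add_one_lt_two_pow (r := k + 1) (by omega)
        · omega
    _ = 2 ^ (k + 1) * (k + 2) ^ k * (k + 3) := by ring

section OrderedField

variable {R : Type*} [Field R] [LinearOrder R] [IsStrictOrderedRing R]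

lemma two_pow_mul_le_add_one_pow {t : R} (ht : 1 ≤ t) {k : ℕ} (hk : 1 ≤ k) :
    2 ^ (k + 1) * t ≤ (t + 1) ^ (k + 1) := by
  obtain ⟨j, rfl⟩ := Nat.exists_eq_add_of_le hk
  calc 2 ^ (1 + j + 1) * t = 4 * t * 2 ^ j := by ring
    _ ≤ (t + 1) ^ 2 * (t + 1) ^ j := by
        gcongr
        · nlinarith [sq_nonneg (t - 1)]
        · linarith
    _ = (t + 1) ^ (1 + j + 1) := by ring

lemma add_three_pow_mul_lt {t : R} (ht : 1 ≤ t) {k : ℕ} (hk : 2 ≤ k) :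
    (k + 3) ^ (k + 1) * t < (k + 2) ^ k * (t + 1) ^ (k + 1) := by
  have hnum : ((k : R) + 3) ^ (k + 1) < 2 ^ (k + 1) * ((k : R) + 2) ^ k := by
    exact_mod_cast add_three_pow_lt_two_pow_mul_add_two_pow hk
  calc ((k : R) + 3) ^ (k + 1) * t < 2 ^ (k + 1) * ((k : R) + 2) ^ k * t := by gcongr
    _ = ((k : R) + 2) ^ k * (2 ^ (k + 1) * t) := by ring
    _ ≤ ((k : R) + 2) ^ k * (t + 1) ^ (k + 1) := by
        gcongr
        exact two_pow_mul_le_add_one_pow ht (by omega)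

end OrderedField

def sylvesterTerm (n r : ℕ) : ℚ :=
  ((r : ℚ) + 1) ^ ((r : ℤ) - 1) * ((sylv (n - r - 1) : ℚ) - 1) ^ r

lemma sylvesterTerm_zero (n : ℕ) : sylvesterTerm n 0 = 1 := by
  simp [sylvesterTerm]

lemma sylvesterTerm_succ (n r : ℕ) :
    sylvesterTerm n (r + 1) = ((r : ℚ) + 2) ^ r * ((sylv (n - r - 2) : ℚ) - 1) ^ (r + 1) := by
  rw [sylvesterTerm, show ((r + 1 : ℕ) : ℤ) - 1 = r by omega, zpow_natCast,
    show n - (r + 1) - 1 = n - r - 2 by omega]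
  push_cast
  ring

lemma sylvesterTerm_two (n : ℕ) : sylvesterTerm n 2 = 3 * ((sylv (n - 3) : ℚ) - 1) ^ 2 := by
  rw [sylvesterTerm_succ]
  norm_num [show n - 1 - 2 = n - 3 by omega]

lemma sylvesterTerm_succ_lt {n r : ℕ} (hn : 6 ≤ n) (hr : 2 ≤ r) (hrn : r + 2 ≤ n) :
    sylvesterTerm n (r + 1) < sylvesterTerm n r := by
  obtain ⟨k, rfl⟩ : ∃ k, r = k + 1 := ⟨r - 1, by omega⟩
  rw [sylvesterTerm_succ, sylvesterTerm_succ, show n - (k + 1) - 2 = n - k - 3 by omega,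
    show n - k - 2 = n - k - 3 + 1 by omega, cast_sylv_succ_sub_one]
  have hs : (2 : ℚ) ≤ sylv (n - k - 3) := by exact_mod_cast two_le_sylv _
  set t : ℚ := (sylv (n - k - 3) : ℚ) - 1
  rw [show (sylv (n - k - 3) : ℚ) = t + 1 by simp [t]]
  suffices h : ((k : ℚ) + 3) ^ (k + 1) * t < (k + 2) ^ k * (t + 1) ^ (k + 1) by
    calc (((k + 1 : ℕ) : ℚ) + 2) ^ (k + 1) * t ^ (k + 1 + 1)
        = ((k : ℚ) + 3) ^ (k + 1) * t * t ^ (k + 1) := by push_cast; ring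
      _ < (k + 2) ^ k * (t + 1) ^ (k + 1) * t ^ (k + 1) :=
          mul_lt_mul_of_pos_right h (pow_pos (by linarith) _)
      _ = (k + 2) ^ k * (t * (t + 1)) ^ (k + 1) := by rw [mul_pow]; ring
  rcases (show k = 1 ∨ 2 ≤ k by omega) with rfl | hk
  · have h7 : (7 : ℚ) ≤ sylv (n - 1 - 3) := by exact_mod_cast seven_le_sylv (by omega)
    norm_num
    nlinarith
  · exact add_three_pow_mul_lt (by linarith) hk

lemma sylvesterTerm_lt_two {n r : ℕ} (hn : 6 ≤ n) (hr : 3 ≤ r) (hrn : r + 1 ≤ n) :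
    sylvesterTerm n r < sylvesterTerm n 2 := by
  induction r, hr using Nat.le_induction with
  | base => exact sylvesterTerm_succ_lt hn le_rfl (by omega)
  | succ r hr ih => exact (sylvesterTerm_succ_lt hn (by omega) (by omega)).trans (ih (by omega))

lemma sylvesterTerm_lt_two_of_ne {n r : ℕ} (hn : 6 ≤ n) (hrn : r ≤ n - 1) (hr : r ≠ 2) :
    sylvesterTerm n r < sylvesterTerm n 2 := by
  have hs : (2 : ℚ) ≤ sylv (n - 3) := by exact_mod_cast two_le_sylv _
  rcases (show r = 0 ∨ r = 1 ∨ 3 ≤ r by omega) with rfl | rfl | hr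
  · rw [sylvesterTerm_zero, sylvesterTerm_two]
    nlinarith
  · rw [sylvesterTerm_succ, sylvesterTerm_two, show n - 0 - 2 = n - 3 + 1 by omega,
      cast_sylv_succ_sub_one]
    norm_num
    nlinarith
  · exact sylvesterTerm_lt_two hn hr (by omega)

/-- For `n ≥ 6` and `0 ≤ r ≤ n-1` one has, in `ℚ`,
`(r+1)^(r-1) * (s_{n-r} - 1)^r ≤ 3 * (s_{n-2} - 1)^2`
(the first power is a `ℤ`-power, so the left side is `1` for `r = 0`),
with equality iff `r = 2`. -/
theorem sylvester_inequality (n : ℕ) (hn : 6 ≤ n) (r : ℕ) (hr : r ≤ n - 1) :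
    ((r : ℚ) + 1) ^ ((r : ℤ) - 1) * ((sylv (n - r - 1) : ℚ) - 1) ^ r
        ≤ 3 * ((sylv (n - 3) : ℚ) - 1) ^ 2 ∧
      (((r : ℚ) + 1) ^ ((r : ℤ) - 1) * ((sylv (n - r - 1) : ℚ) - 1) ^ r
          = 3 * ((sylv (n - 3) : ℚ) - 1) ^ 2 ↔ r = 2) := by
  rw [← sylvesterTerm, ← sylvesterTerm_two]
  rcases eq_or_ne r 2 with rfl | hr2
  · simp
  · have hlt := sylvesterTerm_lt_two_of_ne hn hr hr2
    exact ⟨hlt.le, iff_of_false hlt.ne hr2⟩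
end

section
/- Let P ⊂ ℝ^d be a d-dimensional canonical lattice simplex with vertices v_1, …, v_{d+1}, and let β_1 ≥ β_2 ≥ ⋯ ≥ β_{d+1} > 0 be the barycentric coordinates of the origin with respect to v_1, …, v_{d+1}, i.e. β_1 v_1 + ⋯ + β_{d+1} v_{d+1} = 0 and β_1 + ⋯ + β_{d+1} = 1. Then mult(P) ≤ β_{d+1} / (β_1 ⋯ β_d). -/
/-- The canonical embedding of integer vectors into real vectors. -/
def toR {d : ℕ} (x : Fin d → ℤ) : Fin d → ℝ := fun j => (x j : ℝ)

/-- The lattice simplex (as a subset of `ℝ^d`) with vertex family `v`. -/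
def hullOf {d : ℕ} (v : Fin (d + 1) → Fin d → ℤ) : Set (Fin d → ℝ) :=
  convexHull ℝ (Set.range fun i => toR (v i))

/-- `v` is the vertex family of a `d`-dimensional canonical lattice simplex:
the vertices are affinely independent lattice points, the origin lies in the
interior, and the origin is the only lattice point in the interior. -/
def IsCanonicalSimplex {d : ℕ} (v : Fin (d + 1) → Fin d → ℤ) : Prop :=
  AffineIndependent ℝ (fun i => toR (v i)) ∧
  (0 : Fin d → ℝ) ∈ interior (hullOf v) ∧
  ∀ x : Fin d → ℤ, toR x ∈ interior (hullOf v) → x = 0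

/-- The multiplicity of the lattice simplex with vertex family `v`: the index in
`ℤ^d` of the subgroup generated by the vertices. -/
noncomputable def mult {d : ℕ} (v : Fin (d + 1) → Fin d → ℤ) : ℕ :=
  (AddSubgroup.closure (Set.range v)).index

/-!
Lift each vertex to `w i = (v i, 1) ∈ ℤ^(d+1)`. The `w i` form a rational basis, in which
`e = (0, 1)` has coordinates `β`. A lattice point at height one with positive coordinates is the
lift of an interior lattice point of `P`, hence equals `e`; applied to `r + e` and `w d - r + e`,
this shows that `0` is the only lattice point `r` whose coordinates lie in
`∏ (-β j, β j) × [0, 1)`. So the classes of `ℤ^(d+1)` modulo the lattice `L` spanned by the `w i`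
are separated by their first `d` coordinates modulo `1`, with margin `β j` in direction `j`, and
packing the translates of `∏ [0, β j)` into the torus `(ℝ / ℤ)^d` gives
`[ℤ^(d+1) : L] · β 0 ⋯ β (d-1) ≤ 1`. Finally `[ℤ^(d+1) : L] = q · mult P`, where `q` is the order
of `e` modulo `L`, and `q · β d` is a positive integer.
-/

open Finset Matrix

theorem AddSubgroup.card_mul_card_le_of_sub_mem {G X : Type*} [AddCommGroup G] [Finite G]
    (H : AddSubgroup G) (f : X → G) (hf : ∀ x y, f x - f y ∈ H → x = y) :
    Nat.card H * Nat.card X ≤ Nat.card G := by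
  have hX : Nat.card X ≤ H.index := by
    rw [H.index_eq_card]
    exact Nat.card_le_card_of_injective (fun x => (f x : G ⧸ H))
      fun x y h => hf x y (QuotientAddGroup.eq_iff_sub_mem.mp h)
  calc Nat.card H * Nat.card X ≤ Nat.card H * H.index := Nat.mul_le_mul_left _ hX
    _ = Nat.card G := H.card_mul_index

namespace Matrix

variable {n : Type*} [Fintype n] [DecidableEq n]

/-- The coordinates of `p` in the basis of columns of `M` (junk if `M.det = 0`). -/
noncomputable def ratCoords (M : Matrix n n ℤ) : (n → ℤ) →+ (n → ℚ) :=
  (mulVecLin (M.map ((↑) : ℤ → ℚ))⁻¹).toAddMonoidHom.comp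
    (AddMonoidHom.compLeft (Int.castAddHom ℚ) n)

variable {M : Matrix n n ℤ}

lemma ratCoords_apply (p : n → ℤ) : M.ratCoords p = (M.map (↑))⁻¹ *ᵥ ((↑) ∘ p) := rfl

lemma isUnit_det_map_intCast (hM : M.det ≠ 0) : IsUnit (M.map ((↑) : ℤ → ℚ)).det := by
  rw [← Int.cast_det]
  exact isUnit_iff_ne_zero.mpr (Int.cast_ne_zero.mpr hM)

lemma mulVec_ratCoords (hM : M.det ≠ 0) (p : n → ℤ) :
    M.map (↑) *ᵥ M.ratCoords p = (↑) ∘ p := by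
  rw [ratCoords_apply, mulVec_mulVec, mul_nonsing_inv _ (isUnit_det_map_intCast hM), one_mulVec]

lemma ratCoords_eq_of_mulVec_eq (hM : M.det ≠ 0) {p : n → ℤ} {γ : n → ℚ}
    (h : M.map (↑) *ᵥ γ = (↑) ∘ p) : M.ratCoords p = γ := by
  rw [ratCoords_apply, ← h, mulVec_mulVec, nonsing_inv_mul _ (isUnit_det_map_intCast hM),
    one_mulVec]

lemma ratCoords_mulVec (hM : M.det ≠ 0) (a : n → ℤ) : M.ratCoords (M *ᵥ a) = (↑) ∘ a :=
  ratCoords_eq_of_mulVec_eq hM (funext fun i => (RingHom.map_mulVec (Int.castRingHom ℚ) M a i).symm)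

lemma det_smul_ratCoords (hM : M.det ≠ 0) (p : n → ℤ) :
    (M.det : ℚ) • M.ratCoords p = (↑) ∘ (M.adjugate *ᵥ p) := by
  rw [ratCoords_apply, Int.cast_det, det_smul_inv_mulVec_eq_cramer _ _ (isUnit_det_map_intCast hM),
    cramer_eq_adjugate_mulVec]
  funext i
  have := RingHom.map_mulVec (Int.castRingHom ℚ) M.adjugate p i
  rw [← RingHom.mapMatrix_apply, RingHom.map_adjugate] at this
  exact this.symm

end Matrix

variable {d : ℕ}

/-- The matrix whose `i`-th column is the lifted vertex `(v i, 1)`. -/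
def vertexMatrix (v : Fin (d + 1) → Fin d → ℤ) : Matrix (Fin (d + 1)) (Fin (d + 1)) ℤ :=
  Matrix.of fun j i => Fin.lastCases 1 (fun j => v i j) j

variable {v : Fin (d + 1) → Fin d → ℤ}

lemma vertexMatrix_map_mulVec_castSucc {R : Type*} [Ring R] (γ : Fin (d + 1) → R) (j : Fin d) :
    ((vertexMatrix v).map (↑) *ᵥ γ) j.castSucc = ∑ i, (v i j : R) * γ i := by
  simp [vertexMatrix, mulVec, dotProduct]

lemma vertexMatrix_map_mulVec_last {R : Type*} [Ring R] (γ : Fin (d + 1) → R) :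
    ((vertexMatrix v).map (↑) *ᵥ γ) (Fin.last d) = ∑ i, γ i := by
  simp [vertexMatrix, mulVec, dotProduct]

lemma vertexMatrix_mulVec_castSucc (a : Fin (d + 1) → ℤ) (j : Fin d) :
    (vertexMatrix v *ᵥ a) j.castSucc = ∑ i, a i • v i j := by
  simp [vertexMatrix, mulVec, dotProduct, mul_comm]

lemma det_vertexMatrix_ne_zero (hv : AffineIndependent ℝ fun i => toR (v i)) :
    (vertexMatrix v).det ≠ 0 := by
  intro hdet
  obtain ⟨γ, hγ0, hγ⟩ := exists_mulVec_eq_zero_iff.mpr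
    (by rw [← Int.cast_det, hdet, Int.cast_zero] : ((vertexMatrix v).map ((↑) : ℤ → ℚ)).det = 0)
  have hsum : ∑ i, (γ i : ℝ) = 0 := by
    have := congrFun hγ (Fin.last d)
    rw [vertexMatrix_map_mulVec_last] at this
    exact_mod_cast this
  have hcomb : ∑ i, (γ i : ℝ) • toR (v i) = 0 := by
    funext j
    have := congrFun hγ j.castSucc
    rw [vertexMatrix_map_mulVec_castSucc] at this
    simp only [Finset.sum_apply, Pi.smul_apply, toR, smul_eq_mul, Pi.zero_apply]
    exact_mod_cast (by simpa [mul_comm] using this : ∑ i, γ i * (v i j : ℚ) = 0)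
  exact hγ0 (funext fun i => by exact_mod_cast hv.eq_zero_of_sum_eq_zero hsum hcomb i (mem_univ i))

lemma eq_zero_of_toR_eq_sum (hv : IsCanonicalSimplex v) {x : Fin d → ℤ} {γ : Fin (d + 1) → ℝ}
    (hγ : ∀ i, 0 < γ i) (hsum : ∑ i, γ i = 1) (hx : toR x = ∑ i, γ i • toR (v i)) : x = 0 := by
  obtain ⟨hAI, hint, hcan⟩ := hv
  let b : AffineBasis (Fin (d + 1)) ℝ (Fin d → ℝ) :=
    ⟨fun i => toR (v i), hAI, affineSpan_eq_top_of_nonempty_interior ⟨0, hint⟩⟩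
  refine hcan x ?_
  rw [hullOf, show (fun i => toR (v i)) = b from rfl, b.interior_convexHull]
  intro i
  rw [hx, ← Finset.affineCombination_eq_linear_combination _ _ _ hsum]
  exact (b.coord_apply_combination_of_mem (mem_univ i) hsum).symm ▸ hγ i

lemma sum_ratCoords_vertexMatrix (hM : (vertexMatrix v).det ≠ 0) (p : Fin (d + 1) → ℤ) :
    ∑ i, (vertexMatrix v).ratCoords p i = p (Fin.last d) := by
  have := congrFun (mulVec_ratCoords hM p) (Fin.last d)
  rwa [vertexMatrix_map_mulVec_last] at this

lemma ratCoords_single_last (hM : (vertexMatrix v).det ≠ 0) {β : Fin (d + 1) → ℚ}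
    (hsum : ∑ i, β i = 1) (hbar : ∑ i, β i • (fun j => (v i j : ℚ)) = 0) :
    (vertexMatrix v).ratCoords (Pi.single (Fin.last d) 1) = β := by
  refine ratCoords_eq_of_mulVec_eq hM (funext fun i => ?_)
  induction i using Fin.lastCases with
  | last => simp [vertexMatrix_map_mulVec_last, hsum]
  | cast j =>
    rw [vertexMatrix_map_mulVec_castSucc]
    simpa [mul_comm, Finset.sum_apply] using congrFun hbar j

lemma sum_eq_one_of_ratCoords_single_last (hM : (vertexMatrix v).det ≠ 0) {β : Fin (d + 1) → ℚ}
    (hβ : (vertexMatrix v).ratCoords (Pi.single (Fin.last d) 1) = β) : ∑ i, β i = 1 := by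
  simp [← hβ, sum_ratCoords_vertexMatrix hM]

lemma eq_single_last_of_ratCoords_pos (hv : IsCanonicalSimplex v) {p : Fin (d + 1) → ℤ}
    (hp : p (Fin.last d) = 1) (hpos : ∀ i, 0 < (vertexMatrix v).ratCoords p i) :
    p = Pi.single (Fin.last d) 1 := by
  have hM := det_vertexMatrix_ne_zero hv.1
  set γ := (vertexMatrix v).ratCoords p
  have hsum : ∑ i, (γ i : ℝ) = 1 := by
    have := sum_ratCoords_vertexMatrix hM p
    rw [hp] at this
    exact_mod_cast this
  have hx : toR (fun j => p j.castSucc) = ∑ i, (γ i : ℝ) • toR (v i) := by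
    funext j
    have := congrFun (mulVec_ratCoords hM p) j.castSucc
    rw [vertexMatrix_map_mulVec_castSucc] at this
    simp only [toR, Finset.sum_apply, Pi.smul_apply, smul_eq_mul]
    exact_mod_cast (by simpa [mul_comm] using this.symm : (p j.castSucc : ℚ) = ∑ i, γ i * v i j)
  have h0 := eq_zero_of_toR_eq_sum hv (fun i => by exact_mod_cast hpos i) hsum hx
  funext i
  induction i using Fin.lastCases with
  | last => simp [hp]
  | cast j => simpa using congrFun h0 j

section Box

variable {β : Fin (d + 1) → ℚ} {r : Fin (d + 1) → ℤ}

lemma last_eq_zero_or_one_of_ratCoords_mem_box (hM : (vertexMatrix v).det ≠ 0)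
    (hpos : ∀ i, 0 < β i) (hβ : (vertexMatrix v).ratCoords (Pi.single (Fin.last d) 1) = β)
    (hcs : ∀ j : Fin d, |(vertexMatrix v).ratCoords r j.castSucc| < β j.castSucc)
    (hlast : (vertexMatrix v).ratCoords r (Fin.last d) ∈ Set.Ico 0 1) :
    r (Fin.last d) = 0 ∨ r (Fin.last d) = 1 := by
  have hβsum := sum_eq_one_of_ratCoords_single_last hM hβ
  rw [Fin.sum_univ_castSucc] at hβsum
  have hsum := sum_ratCoords_vertexMatrix hM r
  rw [Fin.sum_univ_castSucc] at hsum
  have hlower :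
      -∑ j : Fin d, β j.castSucc ≤ ∑ j : Fin d, (vertexMatrix v).ratCoords r j.castSucc := by
    rw [← Finset.sum_neg_distrib]
    exact Finset.sum_le_sum fun j _ => (neg_lt_of_abs_lt (hcs j)).le
  have hupper : ∑ j : Fin d, (vertexMatrix v).ratCoords r j.castSucc ≤ ∑ j : Fin d, β j.castSucc :=
    Finset.sum_le_sum fun j _ => (lt_of_abs_lt (hcs j)).le
  have h1 : (-1 : ℚ) < r (Fin.last d) := by linarith [hpos (Fin.last d), hlast.1]
  have h2 : (r (Fin.last d) : ℚ) < 2 := by linarith [hpos (Fin.last d), hlast.2]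
  have : -1 < r (Fin.last d) := by exact_mod_cast h1
  have : r (Fin.last d) < 2 := by exact_mod_cast h2
  omega

lemma eq_zero_of_ratCoords_mem_box (hv : IsCanonicalSimplex v) (hpos : ∀ i, 0 < β i)
    (hβ : (vertexMatrix v).ratCoords (Pi.single (Fin.last d) 1) = β)
    (hcs : ∀ j : Fin d, |(vertexMatrix v).ratCoords r j.castSucc| < β j.castSucc)
    (hlast : (vertexMatrix v).ratCoords r (Fin.last d) ∈ Set.Ico 0 1) : r = 0 := by
  set M := vertexMatrix v
  set e : Fin (d + 1) → ℤ := Pi.single (Fin.last d) 1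
  have hM := det_vertexMatrix_ne_zero hv.1
  obtain h0 | h1 := last_eq_zero_or_one_of_ratCoords_mem_box hM hpos hβ hcs hlast
  · have hcoord (i) : 0 < M.ratCoords (r + e) i := by
      rw [map_add, hβ]
      induction i using Fin.lastCases with
      | last => simp only [Pi.add_apply]; linarith [hlast.1, hpos (Fin.last d)]
      | cast j => simp only [Pi.add_apply]; linarith [neg_lt_of_abs_lt (hcs j)]
    have hre : r + e = e := eq_single_last_of_ratCoords_pos hv (by simp [e, h0]) hcoord
    rwa [add_eq_right] at hre
  · -- then `r = M *ᵥ e`, whose coordinates `e` violate `hlast`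
    have hcoord (i) : 0 < M.ratCoords (M *ᵥ e - r + e) i := by
      rw [map_add, map_sub, ratCoords_mulVec hM, hβ]
      induction i using Fin.lastCases with
      | last => simp [e]; linarith [hlast.2, hpos (Fin.last d)]
      | cast j => simp [e]; linarith [lt_of_abs_lt (hcs j)]
    have hre : M *ᵥ e - r + e = e :=
      eq_single_last_of_ratCoords_pos hv (by simp [e, h1, M, vertexMatrix]) hcoord
    rw [add_eq_right, sub_eq_zero] at hre
    have := hlast.2
    rw [← hre, ratCoords_mulVec hM] at this
    simp [e] at this

end Box

lemma exists_mulVec_eq_of_near_int (hv : IsCanonicalSimplex v) {β : Fin (d + 1) → ℚ}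
    (hpos : ∀ i, 0 < β i) (hβ : (vertexMatrix v).ratCoords (Pi.single (Fin.last d) 1) = β)
    {p : Fin (d + 1) → ℤ}
    (hnear : ∀ j : Fin d, ∃ z : ℤ, |(vertexMatrix v).ratCoords p j.castSucc - z| < β j.castSucc) :
    ∃ a, vertexMatrix v *ᵥ a = p := by
  choose z hz using hnear
  set x := (vertexMatrix v).ratCoords p (Fin.last d)
  refine ⟨Fin.snoc z ⌊x⌋, (sub_eq_zero.mp ?_).symm⟩
  have hr : (vertexMatrix v).ratCoords (p - vertexMatrix v *ᵥ Fin.snoc z ⌊x⌋)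
      = (vertexMatrix v).ratCoords p - (↑) ∘ Fin.snoc z ⌊x⌋ := by
    rw [map_sub, ratCoords_mulVec (det_vertexMatrix_ne_zero hv.1)]
  refine eq_zero_of_ratCoords_mem_box hv hpos hβ (fun j => ?_) ?_ <;> rw [hr]
  · simpa using hz j
  · simp [x, Int.self_sub_floor, Int.fract_nonneg, Int.fract_lt_one]

variable (v) in
/-- Since `det M • ratCoords p = adjugate M *ᵥ p`, this records the first `d` coordinates of `p`
modulo `1`, on the grid `(1 / |det M|) ℤ`. -/
def vertexResidue : (Fin (d + 1) → ℤ) →+ (Fin d → ZMod (vertexMatrix v).det.natAbs) :=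
  AddMonoidHom.mk' (fun p j => ((vertexMatrix v).adjugate *ᵥ p) j.castSucc) fun p q => by
    funext j
    simp [mulVec_add]

lemma vertexResidue_mulVec (a : Fin (d + 1) → ℤ) : vertexResidue v (vertexMatrix v *ᵥ a) = 0 := by
  funext j
  simp only [vertexResidue, AddMonoidHom.mk'_apply, mulVec_mulVec, adjugate_mul, smul_mulVec,
    one_mulVec, Pi.smul_apply, smul_eq_mul, Pi.zero_apply]
  exact (ZMod.intCast_zmod_eq_zero_iff_dvd _ _).mpr (Int.natAbs_dvd.mpr (dvd_mul_right _ _))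

lemma exists_ratCoords_sub_eq_of_vertexResidue_eq (hM : (vertexMatrix v).det ≠ 0)
    {p : Fin (d + 1) → ℤ} {x : Fin d → ℤ} (h : vertexResidue v p = (↑) ∘ x) (j : Fin d) :
    ∃ z : ℤ, (vertexMatrix v).ratCoords p j.castSucc - z = x j / (vertexMatrix v).det := by
  obtain ⟨c, hc⟩ :=
    Int.natAbs_dvd.mp ((ZMod.intCast_eq_intCast_iff_dvd_sub _ _ _).mp (congrFun h j))
  have hc' : (x j : ℚ) - ((vertexMatrix v).adjugate *ᵥ p) j.castSucc
      = (vertexMatrix v).det * c := by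
    exact_mod_cast hc
  have hadj := congrFun (det_smul_ratCoords hM p) j.castSucc
  simp only [Pi.smul_apply, smul_eq_mul, Function.comp_apply] at hadj
  refine ⟨-c, ?_⟩
  rw [eq_div_iff (Int.cast_ne_zero.mpr hM), Int.cast_neg]
  linear_combination hadj - hc'

lemma mem_ker_vertexResidue_iff (hv : IsCanonicalSimplex v) {β : Fin (d + 1) → ℚ}
    (hpos : ∀ i, 0 < β i) (hβ : (vertexMatrix v).ratCoords (Pi.single (Fin.last d) 1) = β)
    {p : Fin (d + 1) → ℤ} : p ∈ (vertexResidue v).ker ↔ ∃ a, vertexMatrix v *ᵥ a = p := by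
  refine ⟨fun hp => exists_mulVec_eq_of_near_int hv hpos hβ fun j => ?_, ?_⟩
  · have hp0 : vertexResidue v p = (↑) ∘ (0 : Fin d → ℤ) := by
      rw [AddMonoidHom.mem_ker.mp hp]
      ext
      simp
    obtain ⟨z, hz⟩ :=
      exists_ratCoords_sub_eq_of_vertexResidue_eq (det_vertexMatrix_ne_zero hv.1) hp0 j
    exact ⟨z, by simpa [hz] using hpos j.castSucc⟩
  · rintro ⟨a, rfl⟩
    exact vertexResidue_mulVec a

lemma eq_of_sub_mem_range_vertexResidue (hv : IsCanonicalSimplex v) {β : Fin (d + 1) → ℚ}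
    (hpos : ∀ i, 0 < β i) (hβ : (vertexMatrix v).ratCoords (Pi.single (Fin.last d) 1) = β)
    {s s' : Fin d → ℕ} (hs : ∀ j, (s j : ℚ) < (vertexMatrix v).det.natAbs * β j.castSucc)
    (hs' : ∀ j, (s' j : ℚ) < (vertexMatrix v).det.natAbs * β j.castSucc)
    (h : (fun j => (s j : ZMod (vertexMatrix v).det.natAbs)) - (fun j => (s' j : ZMod _))
      ∈ (vertexResidue v).range) : s = s' := by
  have hM := det_vertexMatrix_ne_zero hv.1
  have hD : ((vertexMatrix v).det.natAbs : ℚ) = |((vertexMatrix v).det : ℚ)| := by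
    simp [Int.cast_abs]
  have hlt (t : Fin d → ℕ) (ht : ∀ j, (t j : ℚ) < (vertexMatrix v).det.natAbs * β j.castSucc)
      (j : Fin d) : t j < (vertexMatrix v).det.natAbs := by
    have hβ1 : β j.castSucc ≤ 1 := sum_eq_one_of_ratCoords_single_last hM hβ ▸
      Finset.single_le_sum (fun i _ => (hpos i).le) (mem_univ _)
    exact_mod_cast (ht j).trans_le (mul_le_of_le_one_right (by positivity) hβ1)
  obtain ⟨p, hp⟩ := h
  have hp' : vertexResidue v p = (↑) ∘ fun j => (s j : ℤ) - s' j := by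
    rw [hp]
    ext
    simp
  obtain ⟨a, rfl⟩ := exists_mulVec_eq_of_near_int hv hpos hβ fun j => by
    obtain ⟨z, hz⟩ := exists_ratCoords_sub_eq_of_vertexResidue_eq hM hp' j
    refine ⟨z, ?_⟩
    rw [hz, abs_div, ← hD, div_lt_iff₀ (by positivity), mul_comm]
    push_cast
    rw [abs_sub_lt_iff]
    constructor <;> linarith [hs j, hs' j, (s j).cast_nonneg (α := ℚ), (s' j).cast_nonneg (α := ℚ)]
  rw [vertexResidue_mulVec, eq_comm, sub_eq_zero] at hp
  funext j
  have := (ZMod.natCast_eq_natCast_iff' _ _ _).mp (congrFun hp j)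
  rwa [Nat.mod_eq_of_lt (hlt s hs j), Nat.mod_eq_of_lt (hlt s' hs' j)] at this

lemma card_range_vertexResidue_mul_prod_le (hv : IsCanonicalSimplex v) {β : Fin (d + 1) → ℚ}
    (hpos : ∀ i, 0 < β i) (hβ : (vertexMatrix v).ratCoords (Pi.single (Fin.last d) 1) = β) :
    (Nat.card (vertexResidue v).range : ℚ) * ∏ j : Fin d, β j.castSucc ≤ 1 := by
  set D := (vertexMatrix v).det.natAbs
  have hD : 0 < D := Int.natAbs_pos.mpr (det_vertexMatrix_ne_zero hv.1)
  have : NeZero D := ⟨hD.ne'⟩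
  set b : Fin d → ℕ := fun j => ⌈(D : ℚ) * β j.castSucc⌉₊
  have hcount := (vertexResidue v).range.card_mul_card_le_of_sub_mem
    (fun δ : (∀ j, Fin (b j)) => fun j => ((δ j : ℕ) : ZMod D)) fun δ δ' h =>
      funext fun j => Fin.ext <| congrFun (eq_of_sub_mem_range_vertexResidue hv hpos hβ
        (fun j => Nat.lt_ceil.mp (δ j).isLt) (fun j => Nat.lt_ceil.mp (δ' j).isLt) h) j
  simp only [Nat.card_eq_fintype_card, Fintype.card_pi, Fintype.card_fin, ZMod.card, prod_const,
    card_univ] at hcount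
  rw [← mul_le_mul_iff_of_pos_right (by positivity : (0 : ℚ) < D ^ d)]
  calc ((Nat.card (vertexResidue v).range : ℚ) * ∏ j : Fin d, β j.castSucc) * D ^ d
      = Nat.card (vertexResidue v).range * ∏ j : Fin d, (D * β j.castSucc) := by
        rw [prod_mul_distrib, prod_const, card_univ, Fintype.card_fin]
        ring
    _ ≤ Nat.card (vertexResidue v).range * ∏ j : Fin d, (b j : ℚ) := by
        gcongr with j
        · exact fun j _ => mul_nonneg (by positivity) (hpos _).le
        · exact Nat.le_ceil _
    _ ≤ D ^ d := by exact_mod_cast hcount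
    _ = 1 * D ^ d := (one_mul _).symm

lemma ker_vertexResidue_le_comap_closure (hv : IsCanonicalSimplex v) {β : Fin (d + 1) → ℚ}
    (hpos : ∀ i, 0 < β i) (hβ : (vertexMatrix v).ratCoords (Pi.single (Fin.last d) 1) = β) :
    (vertexResidue v).ker ≤ (AddSubgroup.closure (Set.range v)).comap
      (LinearMap.funLeft ℤ ℤ (Fin.castSucc : Fin d → Fin (d + 1))).toAddMonoidHom := by
  intro p hp
  obtain ⟨a, rfl⟩ := (mem_ker_vertexResidue_iff hv hpos hβ).mp hp
  have : (fun j => (vertexMatrix v *ᵥ a) j.castSucc) = ∑ i, a i • v i := by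
    funext j
    simp [vertexMatrix_mulVec_castSucc]
  show (fun j => (vertexMatrix v *ᵥ a) j.castSucc) ∈ AddSubgroup.closure (Set.range v)
  rw [this]
  exact AddSubgroup.sum_mem _ fun i _ =>
    AddSubgroup.zsmul_mem _ (AddSubgroup.subset_closure (Set.mem_range_self i)) _

lemma exists_index_ker_vertexResidue_eq (hv : IsCanonicalSimplex v) {β : Fin (d + 1) → ℚ}
    (hpos : ∀ i, 0 < β i) (hβ : (vertexMatrix v).ratCoords (Pi.single (Fin.last d) 1) = β) :
    ∃ q : ℕ, (vertexResidue v).ker.index = q * mult v ∧ 1 ≤ q * β (Fin.last d) := by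
  have hM := det_vertexMatrix_ne_zero hv.1
  set K := (vertexResidue v).ker
  set K' := (AddSubgroup.closure (Set.range v)).comap
    (LinearMap.funLeft ℤ ℤ (Fin.castSucc : Fin d → Fin (d + 1))).toAddMonoidHom
  have hK' : K'.index = mult v := AddSubgroup.index_comap_of_surjective _
    (LinearMap.funLeft_surjective_of_injective ℤ ℤ _ (Fin.castSucc_injective d))
  have hindex := AddSubgroup.relIndex_mul_index (ker_vertexResidue_le_comap_closure hv hpos hβ)
  refine ⟨K.relIndex K', by rw [← hindex, hK'], ?_⟩
  have hq : K.relIndex K' ≠ 0 := by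
    have : NeZero (vertexMatrix v).det.natAbs := ⟨Int.natAbs_ne_zero.mpr hM⟩
    intro h0
    rw [h0, zero_mul, AddSubgroup.index_ker] at hindex
    exact Nat.card_pos.ne' hindex.symm
  have he : Pi.single (Fin.last d) 1 ∈ K' := by
    rw [AddSubgroup.mem_comap]
    convert (AddSubgroup.closure (Set.range v)).zero_mem
    funext j
    simp [Fin.castSucc_ne_last]
  obtain ⟨a, ha⟩ := (mem_ker_vertexResidue_iff hv hpos hβ).mp (K.nsmul_relIndex_mem he)
  have hqa : (K.relIndex K' : ℚ) * β (Fin.last d) = a (Fin.last d) := by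
    have := congrFun (ratCoords_mulVec hM a) (Fin.last d)
    rw [ha, map_nsmul, hβ] at this
    simpa using this
  have : 0 < a (Fin.last d) := by
    have : (0 : ℚ) < a (Fin.last d) := hqa ▸ mul_pos (by positivity) (hpos _)
    exact_mod_cast this
  rw [hqa]
  exact_mod_cast this

theorem mult_le_barycentric_general {d : ℕ} (v : Fin (d + 1) → Fin d → ℤ)
    (hv : IsCanonicalSimplex v) (β : Fin (d + 1) → ℚ)
    (hpos : ∀ i, 0 < β i) (hsum : ∑ i, β i = 1)
    (hbar : ∑ i, β i • (fun j => (v i j : ℚ)) = 0) :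
    (mult v : ℚ) ≤ β (Fin.last d) / ∏ i : Fin d, β i.castSucc := by
  have hβ := ratCoords_single_last (det_vertexMatrix_ne_zero hv.1) hsum hbar
  obtain ⟨q, hindex, hq⟩ := exists_index_ker_vertexResidue_eq hv hpos hβ
  have hcard := card_range_vertexResidue_mul_prod_le hv hpos hβ
  rw [← AddSubgroup.index_ker, hindex] at hcard
  have hprod : 0 < ∏ i : Fin d, β i.castSucc := prod_pos fun i _ => hpos _
  rw [le_div_iff₀ hprod]
  calc (mult v : ℚ) * ∏ i : Fin d, β i.castSucc
      ≤ (q * β (Fin.last d)) * (mult v * ∏ i : Fin d, β i.castSucc) :=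
        le_mul_of_one_le_left (mul_nonneg (Nat.cast_nonneg _) hprod.le) hq
    _ = β (Fin.last d) * (((q * mult v : ℕ) : ℚ) * ∏ i : Fin d, β i.castSucc) := by
        push_cast
        ring
    _ ≤ β (Fin.last d) := mul_le_of_le_one_right (hpos _).le hcard

/-- If `β 0 ≥ β 1 ≥ … ≥ β d > 0` are the barycentric coordinates of the origin
with respect to the vertices of a `d`-dimensional canonical lattice simplex, then
`mult P ≤ β d / (β 0 ⋯ β (d-1))`. -/
theorem mult_le_barycentric {d : ℕ} (v : Fin (d + 1) → Fin d → ℤ)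
    (hv : IsCanonicalSimplex v) (β : Fin (d + 1) → ℚ)
    (hpos : ∀ i, 0 < β i) (hmono : Antitone β) (hsum : ∑ i, β i = 1)
    (hbar : ∑ i, β i • (fun j => (v i j : ℚ)) = 0) :
    (mult v : ℚ) ≤ β (Fin.last d) / ∏ i : Fin d, β i.castSucc :=
  mult_le_barycentric_general v hv β hpos hsum hbar
end

section
/- Let P ⊂ ℝ^d be a d-dimensional canonical lattice simplex with vertices v_1, …, v_{d+1}, and let β_1 ≥ β_2 ≥ ⋯ ≥ β_{d+1} > 0 be the barycentric coordinates of the origin with respect to v_1, …, v_{d+1}. Then, setting n := d+1, for every j ∈ {1, …, n−1} one has β_1 ⋯ β_j ≤ β_{j+1} + ⋯ + β_n. -/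
/-!
Suppose `∏_{i ∈ s} β i > σ := ∑_{i ∉ s} β i` for a proper subset `s` of the vertices. The symmetric
convex body `{x ∈ ℝ^s | ∀ i, |x i - (∑ x) β i| < β i}` is the preimage of a box of volume
`∏ 2 β i` under a linear map of determinant `σ`, so its volume exceeds `2 ^ |s|` and Minkowski's
theorem gives a nonzero integer point `a` in it, with `A := ∑ a > 0` after a sign change.
The lattice point `-∑_{i ∈ s} a i • v i` has barycentric coordinates `β i - (a i - A β i)`, all
positive, so it is an interior lattice point, hence the origin. Uniqueness of barycentric
coordinates then forces `A β i = 0` for `i ∉ s`, a contradiction.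
-/

open MeasureTheory

section
variable {ι : Type*} [Fintype ι]

theorem setOf_abs_sub_sum_mul_lt_eq_preimage [DecidableEq ι] (b : ι → ℝ) :
    {x : ι → ℝ | ∀ i, |x i - (∑ k, x k) * b i| < b i} =
      Matrix.toLin' (1 - Matrix.vecMulVec b 1) ⁻¹'
        Set.univ.pi fun i => Set.Ioo (-b i) (b i) := by
  ext x
  simp only [Set.mem_ofPred_eq, Set.mem_preimage, Set.mem_univ_pi, Set.mem_Ioo, abs_lt,
    Matrix.toLin'_apply, Matrix.sub_mulVec, Matrix.one_mulVec, Matrix.vecMulVec_mulVec]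
  simp [dotProduct, mul_comm]

theorem convex_setOf_abs_sub_sum_mul_lt (b : ι → ℝ) :
    Convex ℝ {x : ι → ℝ | ∀ i, |x i - (∑ k, x k) * b i| < b i} := by
  classical
  rw [setOf_abs_sub_sum_mul_lt_eq_preimage]
  exact (convex_pi fun i _ => convex_Ioo _ _).linear_preimage _

theorem volume_setOf_abs_sub_sum_mul_lt {b : ι → ℝ} (hb : ∀ i, 0 < b i)
    (hs : ∑ i, b i < 1) :
    volume {x : ι → ℝ | ∀ i, |x i - (∑ k, x k) * b i| < b i} =
      ENNReal.ofReal ((∏ i, 2 * b i) / (1 - ∑ i, b i)) := by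
  classical
  have hdet : (1 - Matrix.vecMulVec b 1 : Matrix ι ι ℝ).det = 1 - ∑ i, b i := by
    rw [sub_eq_add_neg, ← Matrix.neg_vecMulVec, Matrix.vecMulVec_eq Unit,
      Matrix.det_one_add_replicateCol_mul_replicateRow]
    simp [dotProduct, sub_eq_add_neg]
  have hdet_pos : 0 < LinearMap.det (Matrix.toLin' (1 - Matrix.vecMulVec b 1)) := by
    rw [LinearMap.det_toLin', hdet]
    linarith
  rw [setOf_abs_sub_sum_mul_lt_eq_preimage, Measure.addHaar_preimage_linearMap _ hdet_pos.ne',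
    abs_inv, abs_of_pos hdet_pos, LinearMap.det_toLin', hdet, Real.volume_pi_Ioo,
    ← ENNReal.ofReal_prod_of_nonneg (fun i _ => by linarith [hb i]),
    ← ENNReal.ofReal_mul (inv_pos.2 (sub_pos.2 hs)).le, inv_mul_eq_div]
  simp [two_mul]

theorem exists_int_ne_zero_mem_of_two_pow_card_lt_volume {S : Set (ι → ℝ)}
    (h_symm : ∀ x ∈ S, -x ∈ S) (h_conv : Convex ℝ S) (h : 2 ^ Fintype.card ι < volume S) :
    ∃ z : ι → ℤ, z ≠ 0 ∧ (fun i => (z i : ℝ)) ∈ S := by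
  classical
  -- instance search does not see through the `toAddSubgroup` in Minkowski's theorem
  have : Countable (Submodule.span ℤ (Set.range (Pi.basisFun ℝ ι))) := inferInstance
  obtain ⟨⟨x, hx⟩, hx0, hxS⟩ := exists_ne_zero_mem_lattice_of_measure_mul_two_pow_lt_measure
    (ZSpan.isAddFundamentalDomain' (Pi.basisFun ℝ ι) volume) h_symm h_conv
    (by simpa [ZSpan.fundamentalDomain_pi_basisFun, volume_pi_pi] using h)
  choose z hz using ((Pi.basisFun ℝ ι).mem_span_iff_repr_mem ℤ x).1 hx
  obtain rfl : x = fun i => (z i : ℝ) := by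
    ext i
    simpa using (hz i).symm
  refine ⟨z, ?_, hxS⟩
  rintro rfl
  exact hx0 (by ext; simp)

theorem exists_int_ne_zero_abs_sub_sum_mul_lt {b : ι → ℝ} (hb : ∀ i, 0 < b i)
    (hs : ∑ i, b i < 1) (hprod : 1 - ∑ i, b i < ∏ i, b i) :
    ∃ z : ι → ℤ, z ≠ 0 ∧ ∀ i, |z i - (∑ k, (z k : ℝ)) * b i| < b i := by
  refine exists_int_ne_zero_mem_of_two_pow_card_lt_volume (fun x hx i => ?_)
    (convex_setOf_abs_sub_sum_mul_lt b) ?_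
  · simpa [Finset.sum_neg_distrib, neg_add_eq_sub, abs_sub_comm] using hx i
  · have hq : 1 < (∏ i, b i) / (1 - ∑ i, b i) := (one_lt_div (sub_pos.2 hs)).2 hprod
    rw [volume_setOf_abs_sub_sum_mul_lt hb hs, Finset.prod_mul_distrib, Finset.prod_const,
      Finset.card_univ, mul_div_assoc, ← ENNReal.ofReal_ofNat 2,
      ← ENNReal.ofReal_pow zero_le_two, ENNReal.ofReal_lt_ofReal_iff (by positivity)]
    exact lt_mul_of_one_lt_right (by positivity) hq

theorem exists_int_sum_pos_abs_sub_sum_mul_lt {b : ι → ℝ} (hb : ∀ i, 0 < b i)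
    (hs : ∑ i, b i < 1) (hprod : 1 - ∑ i, b i < ∏ i, b i) :
    ∃ z : ι → ℤ, 0 < ∑ i, z i ∧ ∀ i, |z i - (∑ k, (z k : ℝ)) * b i| < b i := by
  obtain ⟨z, hz0, hz⟩ := exists_int_ne_zero_abs_sub_sum_mul_lt hb hs hprod
  have hsum : ∑ i, z i ≠ 0 := by
    intro hsum
    refine hz0 (funext fun i => Int.abs_lt_one_iff.1 ?_)
    have hbi : b i < 1 :=
      (Finset.single_le_sum (fun k _ => (hb k).le) (Finset.mem_univ i)).trans_lt hs
    have hzi := hz i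
    rw [← Int.cast_sum, hsum, Int.cast_zero, zero_mul, sub_zero] at hzi
    exact_mod_cast hzi.trans hbi
  rcases hsum.lt_or_gt with hneg | hpos
  · refine ⟨-z, by simpa using hneg, fun i => ?_⟩
    simpa [Finset.sum_neg_distrib, neg_add_eq_sub, abs_sub_comm] using hz i
  · exact ⟨z, hpos, hz⟩

theorem Finset.exists_int_sum_pos_abs_sub_sum_mul_lt [DecidableEq ι] (s : Finset ι)
    {b : ι → ℝ} (hb : ∀ i ∈ s, 0 < b i) (hs : ∑ i ∈ s, b i < 1)
    (hprod : 1 - ∑ i ∈ s, b i < ∏ i ∈ s, b i) :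
    ∃ a : ι → ℤ, (∀ i ∉ s, a i = 0) ∧ 0 < ∑ i, a i ∧
      ∀ i ∈ s, |a i - (∑ k, (a k : ℝ)) * b i| < b i := by
  obtain ⟨z, hz0, hz⟩ := _root_.exists_int_sum_pos_abs_sub_sum_mul_lt
    (b := fun i : s => b i) (fun i => hb i i.2) (by rwa [Finset.sum_coe_sort])
    (by rwa [Finset.sum_coe_sort, Finset.prod_coe_sort])
  have hsum : ∑ i, (if h : i ∈ s then z ⟨i, h⟩ else 0) = ∑ i, z i := by
    rw [← Finset.sum_attach_eq_sum_dite, Finset.univ_eq_attach]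
  refine ⟨fun i => if h : i ∈ s then z ⟨i, h⟩ else 0, fun i hi => dif_neg hi, hsum ▸ hz0,
    fun i hi => ?_⟩
  have hsumR : ∑ k, ((if h : k ∈ s then z ⟨k, h⟩ else 0 : ℤ) : ℝ) = ∑ k, (z k : ℝ) := by
    exact_mod_cast hsum
  simpa [hi, hsumR] using hz ⟨i, hi⟩

end

namespace IsCanonicalSimplex
variable {d : ℕ} {v : Fin (d + 1) → Fin d → ℤ}

noncomputable def affineBasis (hv : IsCanonicalSimplex v) :
    AffineBasis (Fin (d + 1)) ℝ (Fin d → ℝ) :=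
  ⟨fun i => toR (v i), hv.1, by
    rw [hv.1.affineSpan_eq_top_iff_card_eq_finrank_add_one]
    simp⟩

theorem coe_affineBasis (hv : IsCanonicalSimplex v) :
    ⇑hv.affineBasis = fun i => toR (v i) :=
  rfl

theorem affineBasis_coord_sum_smul (hv : IsCanonicalSimplex v) {γ : Fin (d + 1) → ℝ}
    (hγ : ∑ i, γ i = 1) (i : Fin (d + 1)) :
    hv.affineBasis.coord i (∑ k, γ k • toR (v k)) = γ i := by
  rw [← Finset.univ.affineCombination_eq_linear_combination _ _ hγ, ← coe_affineBasis]
  exact hv.affineBasis.coord_apply_combination_of_mem (Finset.mem_univ i) hγ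

theorem eq_of_sum_smul_eq_toR (hv : IsCanonicalSimplex v) {β γ : Fin (d + 1) → ℝ}
    (hβ : ∑ i, β i = 1) (hβ0 : ∑ i, β i • toR (v i) = 0) (hγpos : ∀ i, 0 < γ i)
    (hγ : ∑ i, γ i = 1) {w : Fin d → ℤ} (hw : ∑ i, γ i • toR (v i) = toR w) : γ = β := by
  have hw_int : toR w ∈ interior (hullOf v) := by
    rw [hullOf, ← coe_affineBasis hv, AffineBasis.interior_convexHull]
    intro i
    rw [← hw, hv.affineBasis_coord_sum_smul hγ]
    exact hγpos i
  have hw0 : toR w = 0 := by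
    rw [hv.2.2 w hw_int]
    ext
    simp [toR]
  ext i
  rw [← hv.affineBasis_coord_sum_smul hγ, ← hv.affineBasis_coord_sum_smul hβ, hw, hw0, hβ0]

theorem eq_sum_mul_of_sub_sum_mul_lt (hv : IsCanonicalSimplex v) {β : Fin (d + 1) → ℝ}
    (hβ : ∑ i, β i = 1) (hβ0 : ∑ i, β i • toR (v i) = 0) {a : Fin (d + 1) → ℤ}
    (ha : ∀ i, a i - (∑ k, (a k : ℝ)) * β i < β i) (i : Fin (d + 1)) :
    a i = (∑ k, (a k : ℝ)) * β i := by
  set A := ∑ k, (a k : ℝ)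
  have hγ : ∑ i, (β i - (a i - A * β i)) = 1 := by
    simp [Finset.sum_sub_distrib, ← Finset.mul_sum, hβ, A]
  have hw : ∑ i, (β i - (a i - A * β i)) • toR (v i) = toR (-∑ k, a k • v k) := by
    ext c
    have hβ0c := congrFun hβ0 c
    simp only [toR, Finset.sum_apply, Pi.smul_apply, smul_eq_mul, Pi.zero_apply] at hβ0c
    simp [toR, Finset.sum_apply, sub_mul, Finset.sum_sub_distrib, mul_assoc, ← Finset.mul_sum,
      hβ0c]
  have key := hv.eq_of_sum_smul_eq_toR hβ hβ0 (fun i => sub_pos.2 (ha i)) hγ hw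
  linarith [congrFun key i]

theorem prod_le_sum_compl (hv : IsCanonicalSimplex v) {β : Fin (d + 1) → ℝ}
    (hpos : ∀ i, 0 < β i) (hβ : ∑ i, β i = 1) (hβ0 : ∑ i, β i • toR (v i) = 0)
    {s : Finset (Fin (d + 1))} (hs : s ≠ Finset.univ) :
    ∏ i ∈ s, β i ≤ ∑ i ∈ sᶜ, β i := by
  obtain ⟨i₀, hi₀⟩ : ∃ i, i ∉ s := by simpa [Finset.eq_univ_iff_forall] using hs
  have hcompl : ∑ i ∈ sᶜ, β i = 1 - ∑ i ∈ s, β i := by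
    rw [← hβ, ← Finset.sum_compl_add_sum s]
    ring
  have hcompl_pos : 0 < ∑ i ∈ sᶜ, β i :=
    Finset.sum_pos (fun i _ => hpos i) ⟨i₀, Finset.mem_compl.2 hi₀⟩
  by_contra! hlt
  rw [hcompl] at hlt hcompl_pos
  obtain ⟨a, ha_out, hA, ha⟩ :=
    s.exists_int_sum_pos_abs_sub_sum_mul_lt (fun i _ => hpos i) (by linarith) hlt
  have hA' : (0 : ℝ) < ∑ k, (a k : ℝ) := by exact_mod_cast hA
  have ha_lt : ∀ i, a i - (∑ k, (a k : ℝ)) * β i < β i := by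
    intro i
    by_cases hi : i ∈ s
    · exact (abs_lt.1 (ha i hi)).2
    · rw [ha_out i hi, Int.cast_zero, zero_sub, neg_lt]
      nlinarith [hpos i]
  have h₀ := hv.eq_sum_mul_of_sub_sum_mul_lt hβ hβ0 ha_lt i₀
  rw [ha_out i₀ hi₀, Int.cast_zero] at h₀
  exact (mul_pos hA' (hpos i₀)).ne h₀

end IsCanonicalSimplex

theorem barycentric_prod_le_sum_general {d : ℕ} (v : Fin (d + 1) → Fin d → ℤ)
    (hv : IsCanonicalSimplex v) (β : Fin (d + 1) → ℚ)
    (hpos : ∀ i, 0 < β i) (hsum : ∑ i, β i = 1)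
    (hbar : ∑ i, β i • (fun j => (v i j : ℚ)) = 0)
    (j : ℕ) (hj2 : j ≤ d) :
    ∏ i ∈ Finset.univ.filter (fun i : Fin (d + 1) => (i : ℕ) < j), β i
      ≤ ∑ i ∈ Finset.univ.filter (fun i : Fin (d + 1) => j ≤ (i : ℕ)), β i := by
  set s := Finset.univ.filter (fun i : Fin (d + 1) => (i : ℕ) < j)
  have hs : s ≠ Finset.univ := fun h => by
    simpa [s] using Finset.eq_univ_iff_forall.1 h ⟨j, by omega⟩
  have hcompl : Finset.univ.filter (fun i : Fin (d + 1) => j ≤ (i : ℕ)) = sᶜ := by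
    simp [s, Finset.compl_filter]
  have hβ0 : ∑ i, (β i : ℝ) • toR (v i) = 0 := by
    ext c
    simpa [toR] using congr_arg (fun x : ℚ => (x : ℝ)) (congrFun hbar c)
  rw [hcompl]
  exact_mod_cast hv.prod_le_sum_compl (fun i => by exact_mod_cast hpos i)
    (by exact_mod_cast hsum) hβ0 hs

/-- If `β 0 ≥ β 1 ≥ … ≥ β d > 0` are the barycentric coordinates of the origin
with respect to the vertices of a `d`-dimensional canonical lattice simplex, then
for every `1 ≤ j ≤ n - 1` (with `n = d + 1`) one has
`β 0 ⋯ β (j-1) ≤ β j + ⋯ + β (n-1)`. -/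
theorem barycentric_prod_le_sum {d : ℕ} (v : Fin (d + 1) → Fin d → ℤ)
    (hv : IsCanonicalSimplex v) (β : Fin (d + 1) → ℚ)
    (hpos : ∀ i, 0 < β i) (hmono : Antitone β) (hsum : ∑ i, β i = 1)
    (hbar : ∑ i, β i • (fun j => (v i j : ℚ)) = 0)
    (j : ℕ) (hj1 : 1 ≤ j) (hj2 : j ≤ d) :
    ∏ i ∈ Finset.univ.filter (fun i : Fin (d + 1) => (i : ℕ) < j), β i
      ≤ ∑ i ∈ Finset.univ.filter (fun i : Fin (d + 1) => j ≤ (i : ℕ)), β i :=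
  barycentric_prod_le_sum_general v hv β hpos hsum hbar j hj2
end

section
/- Let d ≥ 5 and let P := conv{0, s_1 e_1, …, s_{d-2} e_{d-2}, 3(s_{d-1}−1) e_{d-1}, 3(s_{d-1}−1) e_d} − (1, …, 1) ⊂ ℝ^d. Then P is a d-dimensional canonical lattice simplex (indeed a reflexive simplex) and mult(P) = 3·(s_{d-1} − 1)². -/
/-- `v` is the vertex family of a reflexive simplex: the vertices are affinely
independent, the origin is in the interior, and the dual polytope
`P* = {u : ⟨u, x⟩ ≥ -1 ∀ x ∈ P}` is the convex hull of finitely many lattice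
points (equivalently, all its vertices are lattice points). -/
def IsReflexiveSimplex {d : ℕ} (v : Fin (d + 1) → Fin d → ℤ) : Prop :=
  AffineIndependent ℝ (fun i => toR (v i)) ∧
  (0 : Fin d → ℝ) ∈ interior (hullOf v) ∧
  ∃ F : Finset (Fin d → ℤ),
    {u : Fin d → ℝ | ∀ x ∈ hullOf v, -1 ≤ ∑ j, u j * x j}
      = convexHull ℝ (toR '' (F : Set (Fin d → ℤ)))

/-- The vertex family of the simplex
`conv{0, s_1 e_1, …, s_{d-2} e_{d-2}, 3(s_{d-1}-1) e_{d-1}, 3(s_{d-1}-1) e_d} - (1,…,1)`. -/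
def mainV (d : ℕ) : Fin (d + 1) → Fin d → ℤ := fun i j =>
  (if (j : ℕ) + 1 = (i : ℕ) then
      (if (i : ℕ) ≤ d - 2 then (sylv ((i : ℕ) - 1) : ℤ)
       else 3 * ((sylv (d - 2) : ℤ) - 1))
    else 0) - 1

/-!
Write `L = 3 (s_{d-1} - 1)` and `c = (s_1, …, s_{d-2}, L, L)`, so that
`P = conv{0, c_1 e_1, …, c_d e_d} - (1, …, 1)`. The Sylvester identity
`∑_{i<k} 1/s_i = 1 - 1/(s_k - 1)` gives `∑_j 1/c_j + 1/L = 1`, and every `c_j` divides `L`.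

In the barycentric coordinates `(x_j + 1)/c_j` and `1 - ∑_j (x_j + 1)/c_j` the interior of `P` is
cut out by strict inequalities. At the origin the last one is `1 - ∑_j 1/c_j = 1/L > 0`; any other
interior lattice point is `≥ 0` with some `x_k ≥ 1`, which raises `∑_j (x_j + 1)/c_j` by at least
`1/c_k ≥ 1/L`, to `≥ 1`. The dual simplex has the vertices `e_1, …, e_d` and
`-(L/c_1, …, L/c_d)`, lattice points because `c_j ∣ L`. Since every `c_j` divides `c_d = L`, the vertex lattice is
`{x | c_j ∣ x_j - x_d for all j}`, the kernel of a surjection onto `∏_{j<d} ℤ/c_j`; hence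
`mult P = ∏_{j<d} c_j = (s_{d-1} - 1) L`.
-/

open Module Set Finset

lemma two_le_sylv_s12 : ∀ n, 2 ≤ sylv n
  | 0 => le_rfl
  | n + 1 => by
    have := two_le_sylv_s12 n
    simp only [sylv]
    nlinarith [Nat.sub_add_cancel (one_le_two.trans this)]

lemma sylv_succ_sub_one (n : ℕ) : sylv (n + 1) - 1 = sylv n * (sylv n - 1) := rfl

lemma prod_range_sylv : ∀ n, ∏ j ∈ range n, sylv j = sylv n - 1
  | 0 => rfl
  | n + 1 => by rw [prod_range_succ, prod_range_sylv n, sylv_succ_sub_one, mul_comm]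

lemma sylv_dvd_sylv_sub_one {j n : ℕ} (h : j < n) : sylv j ∣ sylv n - 1 :=
  prod_range_sylv n ▸ dvd_prod_of_mem _ (mem_range.2 h)

lemma sum_range_inv_sylv : ∀ n, ∑ j ∈ range n, (1 : ℝ) / sylv j + 1 / (sylv n - 1 : ℕ) = 1
  | 0 => by norm_num [sylv]
  | n + 1 => by
    have h2 := two_le_sylv_s12 n
    have ha : (0 : ℝ) < (sylv n - 1 : ℕ) := Nat.cast_pos.2 (by omega)
    have hs : (sylv n : ℝ) = (sylv n - 1 : ℕ) + 1 := by
      rw [Nat.cast_sub (by omega : 1 ≤ sylv n)]; ring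
    have ih := sum_range_inv_sylv n
    rw [sum_range_succ, sylv_succ_sub_one, Nat.cast_mul, hs]
    generalize ((sylv n - 1 : ℕ) : ℝ) = a at ha ih ⊢
    have hsplit : 1 / (a + 1) + 1 / ((a + 1) * a) = 1 / a := by field_simp
    linarith

def IsBarycentricCoords {ι E : Type*} [Fintype ι] [AddCommGroup E] [Module ℝ E]
    (p : ι → E) (w : E → ι → ℝ) : Prop :=
  ∀ x, ∑ i, w x i = 1 ∧ ∑ i, w x i • p i = x

namespace IsBarycentricCoords

section
variable {ι E : Type*} [Fintype ι] [AddCommGroup E] [Module ℝ E] {p : ι → E} {w : E → ι → ℝ}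

theorem affineCombination_eq (hw : IsBarycentricCoords p w) (x : E) :
    univ.affineCombination ℝ p (w x) = x := by
  rw [affineCombination_eq_linear_combination _ _ _ (hw x).1, (hw x).2]

theorem affineSpan_eq_top (hw : IsBarycentricCoords p w) : affineSpan ℝ (range p) = ⊤ :=
  eq_top_iff.2 fun x _ => hw.affineCombination_eq x ▸ affineCombination_mem_affineSpan (hw x).1 p

theorem affineIndependent (hw : IsBarycentricCoords p w)
    (hcard : Fintype.card ι = finrank ℝ E + 1) : AffineIndependent ℝ p := by
  rw [affineIndependent_iff_finrank_vectorSpan_eq ℝ p hcard,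
    AffineSubspace.vectorSpan_eq_top_of_affineSpan_eq_top ℝ E E hw.affineSpan_eq_top, finrank_top]

def toAffineBasis (hw : IsBarycentricCoords p w) (hcard : Fintype.card ι = finrank ℝ E + 1) :
    AffineBasis ι ℝ E :=
  ⟨p, hw.affineIndependent hcard, hw.affineSpan_eq_top⟩

@[simp] theorem coe_toAffineBasis (hw : IsBarycentricCoords p w)
    (hcard : Fintype.card ι = finrank ℝ E + 1) : ⇑(hw.toAffineBasis hcard) = p := rfl

@[simp] theorem coord_toAffineBasis (hw : IsBarycentricCoords p w)
    (hcard : Fintype.card ι = finrank ℝ E + 1) (i : ι) (x : E) :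
    (hw.toAffineBasis hcard).coord i x = w x i := by
  conv_lhs => rw [← hw.affineCombination_eq x]
  exact (hw.toAffineBasis hcard).coord_apply_combination_of_mem (mem_univ i) (hw x).1

theorem convexHull_eq (hw : IsBarycentricCoords p w) (hcard : Fintype.card ι = finrank ℝ E + 1) :
    convexHull ℝ (range p) = {x | ∀ i, 0 ≤ w x i} := by
  simpa using (hw.toAffineBasis hcard).convexHull_eq_nonneg_coord

end

theorem interior_convexHull_eq {ι E : Type*} [Fintype ι] [NormedAddCommGroup E] [NormedSpace ℝ E]
    {p : ι → E} {w : E → ι → ℝ} (hw : IsBarycentricCoords p w)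
    (hcard : Fintype.card ι = finrank ℝ E + 1) :
    interior (convexHull ℝ (range p)) = {x | ∀ i, 0 < w x i} := by
  simpa using (hw.toAffineBasis hcard).interior_convexHull

end IsBarycentricCoords

lemma card_fin_succ_eq_finrank_add_one (n : ℕ) :
    Fintype.card (Fin (n + 1)) = finrank ℝ (Fin n → ℝ) + 1 := by
  simp

lemma forall_mem_convexHull_range_neg_one_le_iff {ι : Type*} {n : ℕ} (p : ι → Fin n → ℝ)
    (u : Fin n → ℝ) :
    (∀ x ∈ convexHull ℝ (range p), -1 ≤ ∑ j, u j * x j) ↔ ∀ i, -1 ≤ ∑ j, u j * p i j := by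
  refine ⟨fun h i => h _ (subset_convexHull ℝ _ (mem_range_self i)), fun h x hx => ?_⟩
  have hlin : IsLinearMap ℝ fun x : Fin n → ℝ => ∑ j, u j * x j :=
    ⟨fun x y => by simp [mul_add, sum_add_distrib], fun a x => by simp [mul_sum, mul_left_comm]⟩
  exact convexHull_min (t := {x | -1 ≤ ∑ j, u j * x j}) (range_subset_iff.2 h)
    (convex_halfSpace_ge hlin (-1)) hx

@[simp] lemma toR_apply {n : ℕ} (x : Fin n → ℤ) (j : Fin n) : toR x j = x j := rfl

def cornerVertices {n : ℕ} (c : Fin n → ℕ) : Fin (n + 1) → Fin n → ℤ :=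
  Fin.cons (-1) fun k => Pi.single k (c k : ℤ) - 1

noncomputable def cornerBary {n : ℕ} (c : Fin n → ℕ) (x : Fin n → ℝ) : Fin (n + 1) → ℝ :=
  Fin.cons (1 - ∑ j, (x j + 1) / c j) fun k => (x k + 1) / c k

/-- `cornerDualVertices c L i` pairs to `-1` with every `cornerVertices c i'`, `i' ≠ i`, as soon as
`∑ j, 1 / c j + 1 / L = 1`. -/
def cornerDualVertices {n : ℕ} (c : Fin n → ℕ) (L : ℕ) : Fin (n + 1) → Fin n → ℤ :=
  Fin.cons (fun j => -((L / c j : ℕ) : ℤ)) fun k => Pi.single k 1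

noncomputable def cornerDualBary {n : ℕ} (c : Fin n → ℕ) (L : ℕ) (u : Fin n → ℝ) :
    Fin (n + 1) → ℝ :=
  Fin.cons ((1 - ∑ j, u j) / L) fun k => u k + (1 - ∑ j, u j) / c k

section CornerSimplex

variable {n : ℕ} {c : Fin n → ℕ} {L : ℕ}

@[simp] lemma cornerVertices_zero : cornerVertices c 0 = -1 := rfl

@[simp] lemma cornerVertices_succ (k : Fin n) :
    cornerVertices c k.succ = Pi.single k (c k : ℤ) - 1 := rfl

lemma toR_cornerVertices_succ (k j : Fin n) :
    toR (cornerVertices c k.succ) j = (if j = k then (c k : ℝ) else 0) - 1 := by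
  rw [toR_apply, cornerVertices_succ, Pi.sub_apply, Pi.single_apply]
  split_ifs <;> simp

lemma sum_mul_toR_cornerVertices_zero (u : Fin n → ℝ) :
    ∑ j, u j * toR (cornerVertices c 0) j = -∑ j, u j := by
  simp

lemma sum_mul_toR_cornerVertices_succ (u : Fin n → ℝ) (k : Fin n) :
    ∑ j, u j * toR (cornerVertices c k.succ) j = c k * u k - ∑ j, u j := by
  simp only [toR_cornerVertices_succ, mul_sub, mul_ite, mul_zero, mul_one, sum_sub_distrib,
    Fintype.sum_ite_eq', mul_comm]

lemma isBarycentricCoords_cornerBary (hc : ∀ j, c j ≠ 0) :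
    IsBarycentricCoords (fun i => toR (cornerVertices c i)) (cornerBary c) := by
  refine fun x => ⟨by simp [cornerBary, Fin.sum_univ_succ], funext fun j => ?_⟩
  simp only [Finset.sum_apply, Pi.smul_apply, smul_eq_mul, Fin.sum_univ_succ, cornerBary,
    Fin.cons_zero, Fin.cons_succ, toR_cornerVertices_succ]
  simp only [mul_sub, mul_ite, mul_zero, mul_one, sum_sub_distrib, Fintype.sum_ite_eq,
    div_mul_cancel₀ _ (Nat.cast_ne_zero.2 (hc j) : (c j : ℝ) ≠ 0)]
  simp

lemma affineIndependent_cornerVertices (hc : ∀ j, c j ≠ 0) :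
    AffineIndependent ℝ (fun i => toR (cornerVertices c i)) :=
  (isBarycentricCoords_cornerBary hc).affineIndependent (card_fin_succ_eq_finrank_add_one n)

lemma interior_hullOf_cornerVertices (hc : ∀ j, c j ≠ 0) :
    interior (hullOf (cornerVertices c)) = {x | ∀ i, 0 < cornerBary c x i} :=
  (isBarycentricCoords_cornerBary hc).interior_convexHull_eq (card_fin_succ_eq_finrank_add_one n)

lemma zero_mem_interior_hullOf_cornerVertices (hc : ∀ j, c j ≠ 0) (hL : L ≠ 0)
    (hsum : ∑ j, (1 : ℝ) / c j + 1 / L = 1) :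
    (0 : Fin n → ℝ) ∈ interior (hullOf (cornerVertices c)) := by
  rw [interior_hullOf_cornerVertices hc]
  intro i
  induction i using Fin.cases with
  | zero =>
    simp only [cornerBary, Fin.cons_zero, Pi.zero_apply, zero_add]
    have : (0 : ℝ) < 1 / L := by positivity
    linarith
  | succ k =>
    have := hc k
    simp only [cornerBary, Fin.cons_succ, Pi.zero_apply, zero_add]
    positivity

lemma eq_zero_of_toR_mem_interior_hullOf_cornerVertices (hc : ∀ j, c j ≠ 0)
    (hle : ∀ j, c j ≤ L) (hsum : ∑ j, (1 : ℝ) / c j + 1 / L = 1) (x : Fin n → ℤ)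
    (hx : toR x ∈ interior (hullOf (cornerVertices c))) : x = 0 := by
  rw [interior_hullOf_cornerVertices hc] at hx
  have hcR : ∀ j, (0 : ℝ) < c j := fun j => Nat.cast_pos.2 (Nat.pos_of_ne_zero (hc j))
  have hnonneg : ∀ j, 0 ≤ x j := fun j => by
    have := hx j.succ
    simp only [cornerBary, Fin.cons_succ, toR_apply] at this
    have : (-1 : ℝ) < x j := by linarith [(div_pos_iff_of_pos_right (hcR j)).1 this]
    have : -1 < x j := by exact_mod_cast this
    omega
  by_contra hne
  obtain ⟨k, hk⟩ := Function.ne_iff.1 hne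
  have hk1 : (1 : ℝ) ≤ x k := by exact_mod_cast (hnonneg k).lt_of_ne' hk
  have hsplit : ∑ j, (toR x j + 1) / c j = ∑ j, (x j : ℝ) / c j + ∑ j, (1 : ℝ) / c j := by
    rw [← sum_add_distrib]; simp [add_div]
  have hterm : (1 : ℝ) / L ≤ x k / c k :=
    calc (1 : ℝ) / L ≤ 1 / c k := one_div_le_one_div_of_le (hcR k) (by exact_mod_cast hle k)
      _ ≤ x k / c k := div_le_div_of_nonneg_right hk1 (hcR k).le
  have hsingle : (x k : ℝ) / c k ≤ ∑ j, (x j : ℝ) / c j :=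
    single_le_sum (f := fun j => (x j : ℝ) / c j)
      (fun j _ => div_nonneg (by exact_mod_cast hnonneg j) (hcR j).le) (mem_univ k)
  have h0 := hx 0
  simp only [cornerBary, Fin.cons_zero] at h0
  linarith

theorem isCanonicalSimplex_cornerVertices (hc : ∀ j, c j ≠ 0) (hL : L ≠ 0)
    (hle : ∀ j, c j ≤ L) (hsum : ∑ j, (1 : ℝ) / c j + 1 / L = 1) :
    IsCanonicalSimplex (cornerVertices c) :=
  ⟨affineIndependent_cornerVertices hc, zero_mem_interior_hullOf_cornerVertices hc hL hsum,
    eq_zero_of_toR_mem_interior_hullOf_cornerVertices hc hle hsum⟩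

lemma isBarycentricCoords_cornerDualBary (hc : ∀ j, c j ≠ 0) (hL : L ≠ 0)
    (hdvd : ∀ j, c j ∣ L) (hsum : ∑ j, (1 : ℝ) / c j + 1 / L = 1) :
    IsBarycentricCoords (fun i => toR (cornerDualVertices c L i)) (cornerDualBary c L) := by
  intro u
  constructor
  · have hsplit : ∑ k, (u k + (1 - ∑ j, u j) / c k) =
        ∑ j, u j + (1 - ∑ j, u j) * ∑ j, (1 : ℝ) / c j := by
      rw [mul_sum, ← sum_add_distrib]; simp [div_eq_mul_inv]
    simp only [Fin.sum_univ_succ, cornerDualBary, Fin.cons_zero, Fin.cons_succ, hsplit]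
    linear_combination (1 - ∑ j, u j) * hsum
  · ext j
    have hLj : ((L / c j : ℕ) : ℝ) = L / c j := Nat.cast_div (hdvd j) (Nat.cast_ne_zero.2 (hc j))
    have hLR : (L : ℝ) ≠ 0 := Nat.cast_ne_zero.2 hL
    simp only [Finset.sum_apply, Pi.smul_apply, smul_eq_mul, Fin.sum_univ_succ, cornerDualBary,
      cornerDualVertices, Fin.cons_zero, Fin.cons_succ, toR_apply, Pi.single_apply, Int.cast_neg,
      Int.cast_natCast, Int.cast_ite, Int.cast_one, Int.cast_zero, mul_ite, mul_one, mul_zero,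
      Fintype.sum_ite_eq, hLj]
    field_simp
    ring

lemma cornerDualBary_nonneg_iff (hc : ∀ j, c j ≠ 0) (hL : L ≠ 0) (u : Fin n → ℝ)
    (i : Fin (n + 1)) :
    0 ≤ cornerDualBary c L u i ↔ -1 ≤ ∑ j, u j * toR (cornerVertices c i) j := by
  induction i using Fin.cases with
  | zero =>
    have : (0 : ℝ) < L := Nat.cast_pos.2 (Nat.pos_of_ne_zero hL)
    rw [cornerDualBary, Fin.cons_zero, sum_mul_toR_cornerVertices_zero, le_div_iff₀ this,
      zero_mul]
    constructor <;> intro h <;> linarith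
  | succ k =>
    have hck : (0 : ℝ) < c k := Nat.cast_pos.2 (Nat.pos_of_ne_zero (hc k))
    have : u k + (1 - ∑ j, u j) / c k = (1 + (c k * u k - ∑ j, u j)) / c k := by
      field_simp; ring
    rw [cornerDualBary, Fin.cons_succ, sum_mul_toR_cornerVertices_succ, this, le_div_iff₀ hck,
      zero_mul]
    constructor <;> intro h <;> linarith

theorem isReflexiveSimplex_cornerVertices (hc : ∀ j, c j ≠ 0) (hL : L ≠ 0)
    (hdvd : ∀ j, c j ∣ L) (hsum : ∑ j, (1 : ℝ) / c j + 1 / L = 1) :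
    IsReflexiveSimplex (cornerVertices c) := by
  refine ⟨affineIndependent_cornerVertices hc, zero_mem_interior_hullOf_cornerVertices hc hL hsum,
    univ.image (cornerDualVertices c L), ?_⟩
  rw [coe_image, coe_univ, image_univ, ← range_comp, Function.comp_def,
    (isBarycentricCoords_cornerDualBary hc hL hdvd hsum).convexHull_eq
      (card_fin_succ_eq_finrank_add_one n)]
  ext u
  simp only [hullOf, mem_ofPred_eq, forall_mem_convexHull_range_neg_one_le_iff,
    cornerDualBary_nonneg_iff hc hL]

def coordDiffMod (c : Fin n → ℕ) (k : Fin n) :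
    (Fin n → ℤ) →+ ((j : {j // j ≠ k}) → ZMod (c j)) :=
  AddMonoidHom.mk' (fun x j => ((x j - x k : ℤ) : ZMod (c j))) fun x y => by
    funext j; simp only [Pi.add_apply]; push_cast; ring

lemma coordDiffMod_eq_zero_iff (k : Fin n) (x : Fin n → ℤ) :
    coordDiffMod c k x = 0 ↔ ∀ j, (c j : ℤ) ∣ x j - x k := by
  simp only [funext_iff, coordDiffMod, AddMonoidHom.mk'_apply, Pi.zero_apply,
    ZMod.intCast_zmod_eq_zero_iff_dvd, Subtype.forall]
  refine ⟨fun h j => ?_, fun h j _ => h j⟩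
  by_cases hj : j = k
  · simp [hj]
  · exact h j hj

lemma coordDiffMod_surjective (k : Fin n) : Function.Surjective (coordDiffMod c k) := by
  intro y
  refine ⟨fun j => if h : j = k then 0 else ((y ⟨j, h⟩).cast : ℤ), funext fun j => ?_⟩
  simp [coordDiffMod, j.2]

lemma closure_range_cornerVertices (k : Fin n) (hk : ∀ j, c j ∣ c k) :
    AddSubgroup.closure (range (cornerVertices c)) = (coordDiffMod c k).ker := by
  apply le_antisymm
  · rw [AddSubgroup.closure_le]
    rintro _ ⟨i, rfl⟩
    rw [SetLike.mem_coe, AddMonoidHom.mem_ker, coordDiffMod_eq_zero_iff]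
    intro j
    induction i using Fin.cases with
    | zero => simp
    | succ i =>
      rw [cornerVertices_succ, Pi.sub_apply, Pi.sub_apply, Pi.one_apply, Pi.one_apply,
        sub_sub_sub_cancel_right]
      by_cases hji : j = i <;> by_cases hki : k = i <;> simp [hji, hki]
      subst hki
      exact_mod_cast hk j
  · intro x hx
    rw [AddMonoidHom.mem_ker, coordDiffMod_eq_zero_iff] at hx
    set H := AddSubgroup.closure (range (cornerVertices c))
    have hsingle : ∀ j, Pi.single j (c j : ℤ) ∈ H := fun j => by
      simpa using sub_mem (AddSubgroup.subset_closure (mem_range_self j.succ))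
        (AddSubgroup.subset_closure (mem_range_self 0) : cornerVertices c 0 ∈ H)
    have hx_eq : x = (-x k) • cornerVertices c 0 +
        ∑ j, ((x j - x k) / c j) • Pi.single j (c j : ℤ) := by
      ext l
      simp [Finset.sum_apply, Pi.single_apply, Int.ediv_mul_cancel (hx l)]
    rw [hx_eq]
    exact add_mem (AddSubgroup.zsmul_mem _ (AddSubgroup.subset_closure (mem_range_self 0)) _)
      (sum_mem fun j _ => AddSubgroup.zsmul_mem _ (hsingle j) _)

theorem mult_cornerVertices (k : Fin n) (hk : ∀ j, c j ∣ c k) :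
    mult (cornerVertices c) = ∏ j ∈ univ.erase k, c j := by
  rw [mult, closure_range_cornerVertices k hk, AddSubgroup.index_ker,
    (AddMonoidHom.range_eq_top (f := coordDiffMod c k)).2 (coordDiffMod_surjective k),
    Nat.card_congr AddSubgroup.topEquiv.toEquiv, Nat.card_pi,
    prod_congr rfl fun (j : {j // j ≠ k}) _ => Nat.card_zmod (c j)]
  exact (prod_subtype _ (by simp) c).symm

end CornerSimplex

def sylvWeights (m : ℕ) : Fin (m + 2) → ℕ := fun j =>
  if (j : ℕ) < m then sylv j else 3 * (sylv m - 1)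

section SylvWeights

variable {m : ℕ}

lemma sylvWeights_last : sylvWeights m (Fin.last (m + 1)) = 3 * (sylv m - 1) :=
  if_neg (by simp)

lemma sylvWeights_ne_zero (j : Fin (m + 2)) : sylvWeights m j ≠ 0 := by
  have := two_le_sylv_s12 j; have := two_le_sylv_s12 m
  unfold sylvWeights; split_ifs <;> omega

lemma sylvWeights_dvd (j : Fin (m + 2)) : sylvWeights m j ∣ 3 * (sylv m - 1) := by
  unfold sylvWeights
  split_ifs with hj
  · exact (sylv_dvd_sylv_sub_one hj).mul_left 3
  · exact dvd_rfl

lemma sum_inv_sylvWeights :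
    ∑ j, (1 : ℝ) / sylvWeights m j + 1 / (3 * (sylv m - 1) : ℕ) = 1 := by
  have hfirst : ∀ j ∈ range m, (1 : ℝ) / (if j < m then sylv j else 3 * (sylv m - 1) : ℕ) =
      1 / sylv j := fun j hj => by rw [if_pos (mem_range.1 hj)]
  have ha : (0 : ℝ) < (sylv m - 1 : ℕ) := Nat.cast_pos.2 (by have := two_le_sylv_s12 m; omega)
  simp only [sylvWeights]
  rw [Fin.sum_univ_eq_sum_range
      (fun j => (1 : ℝ) / (if j < m then sylv j else 3 * (sylv m - 1) : ℕ)),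
    sum_range_succ, sum_range_succ, sum_congr rfl hfirst, if_neg (lt_irrefl m),
    if_neg (by omega), Nat.cast_mul, Nat.cast_ofNat]
  have hthirds : (1 : ℝ) / (3 * (sylv m - 1 : ℕ)) + 1 / (3 * (sylv m - 1 : ℕ)) +
      1 / (3 * (sylv m - 1 : ℕ)) = 1 / (sylv m - 1 : ℕ) := by
    field_simp; ring
  linarith [sum_range_inv_sylv m]

lemma prod_erase_last_sylvWeights :
    ∏ j ∈ univ.erase (Fin.last (m + 1)), sylvWeights m j = 3 * (sylv m - 1) ^ 2 := by
  have hL : 0 < 3 * (sylv m - 1) := by have := two_le_sylv_s12 m; omega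
  refine Nat.eq_of_mul_eq_mul_right hL ?_
  calc (∏ j ∈ univ.erase (Fin.last (m + 1)), sylvWeights m j) * (3 * (sylv m - 1))
      = ∏ j, sylvWeights m j := by
        rw [← sylvWeights_last]; exact prod_erase_mul _ _ (mem_univ _)
    _ = 3 * (sylv m - 1) ^ 2 * (3 * (sylv m - 1)) := by
        simp only [sylvWeights]
        rw [Fin.prod_univ_eq_prod_range (fun j => if j < m then sylv j else 3 * (sylv m - 1)),
          prod_range_succ, prod_range_succ, prod_congr rfl fun j hj => if_pos (mem_range.1 hj),
          prod_range_sylv, if_neg (lt_irrefl m), if_neg (by omega)]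
        ring

lemma mainV_eq_cornerVertices (m : ℕ) : mainV (m + 2) = cornerVertices (sylvWeights m) := by
  funext i j
  induction i using Fin.cases with
  | zero => simp [mainV]
  | succ i =>
    simp only [mainV, cornerVertices_succ, Pi.sub_apply, Pi.one_apply, Pi.single_apply,
      Fin.val_succ, Nat.add_right_cancel_iff, Fin.val_inj, sylvWeights]
    split_ifs <;> first | omega | push_cast [Nat.cast_sub (one_le_two.trans (two_le_sylv_s12 m))]; ring

end SylvWeights

/-- For `d ≥ 5`, the simplex
`conv{0, s_1 e_1, …, s_{d-2} e_{d-2}, 3(s_{d-1}-1) e_{d-1}, 3(s_{d-1}-1) e_d} - (1,…,1)`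
is a `d`-dimensional canonical (indeed reflexive) lattice simplex of multiplicity
`3 (s_{d-1}-1)^2`. -/
theorem mainV_canonical_reflexive_mult {d : ℕ} (hd : 5 ≤ d) :
    IsCanonicalSimplex (mainV d) ∧ IsReflexiveSimplex (mainV d) ∧
      mult (mainV d) = 3 * (sylv (d - 2) - 1) ^ 2 := by
  obtain ⟨m, rfl⟩ : ∃ m, d = m + 2 := ⟨d - 2, by omega⟩
  have hL : 3 * (sylv m - 1) ≠ 0 := by have := two_le_sylv_s12 m; omega
  rw [Nat.add_sub_cancel, mainV_eq_cornerVertices]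
  refine ⟨isCanonicalSimplex_cornerVertices sylvWeights_ne_zero hL
      (fun j => Nat.le_of_dvd (Nat.pos_of_ne_zero hL) (sylvWeights_dvd j)) sum_inv_sylvWeights,
    isReflexiveSimplex_cornerVertices sylvWeights_ne_zero hL sylvWeights_dvd sum_inv_sylvWeights,
    ?_⟩
  rw [mult_cornerVertices (Fin.last (m + 1)) (sylvWeights_last ▸ sylvWeights_dvd),
    prod_erase_last_sylvWeights]
end
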